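/- arXiv:math/0612588 — 3 statements merged into one kernel-verified Lean document; each statement's English description precedes it below -/
import Mathlib

section
/- (van der Corput) Let k ≥ 1 be an integer, a < b real numbers, and ψ ∈ C^k([a,b]) real-valued with |ψ^{(k)}(x)| ≥ C > 0 for all x ∈ (a,b). Assume either (i) k = 1 and ψ'' has at most one zero in (a,b) (in particular ψ' is piecewise monotonic with at most two pieces), or (ii) k ≥ 2. Then there is a constant c_k depending only on k such that for all λ > 0, |∫_a^b e^{iλψ(t)} dt| ≤ c_k (λ C)^{−1/k}. -/
/-!
For `k = 1` with `ψ' ≥ C` monotone, write `e^{iλψ} = (iλψ')⁻¹ (e^{iλψ})'` and expand the monotone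
weight `(λψ')⁻¹ ∈ [0, (λC)⁻¹]` as an integral of indicators of its superlevel sets. These are
intervals, over which the integral of the derivative `(e^{iλψ})'` has norm at most `2`; hence
`|∫ e^{iλψ}| ≤ 2 / (λC)`. If `ψ''` vanishes at most once, Darboux's theorem makes `ψ'` monotone on
either side of the zero, which gives `4 / (λC)`.

For order `k + 1`, normalise to `ψ^{(k+1)} ≥ C`. Then `g = ψ^{(k)}` grows at rate `C`, so
`|g| ≥ Cδ` off an interval of length `2δ`. The bound of order `k` with constant `Cδ` controls the
two outer pieces by `c_k (λCδ)^{-1/k}`, the middle piece is at most `2δ`, and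
`δ = (λC)^{-1/(k+1)}` balances the two, so `c_{k+1} = 2 c_k + 2`. On the outer pieces `ψ^{(k)}`
is monotone, so the induction only ever uses the case `k = 1` with `ψ'` monotone.
-/

open MeasureTheory Filter Set
open scoped Topology

theorem forall_le_or_forall_le_neg_of_le_abs {s : Set ℝ} (hs : IsPreconnected s) {φ : ℝ → ℝ}
    (hφ : ContinuousOn φ s) {C : ℝ} (hC : 0 < C) (h : ∀ x ∈ s, C ≤ |φ x|) :
    (∀ x ∈ s, C ≤ φ x) ∨ ∀ x ∈ s, φ x ≤ -C := by
  by_contra! hcon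
  obtain ⟨⟨x, hx, hxC⟩, y, hy, hyC⟩ := hcon
  have hx' : φ x ≤ -C := ((le_abs'.1 (h x hx)).resolve_right hxC.not_ge)
  have hy' : C ≤ φ y := ((le_abs'.1 (h y hy)).resolve_left hyC.not_ge)
  obtain ⟨z, hz, hz0⟩ := hs.intermediate_value hx hy hφ
    (show (0 : ℝ) ∈ Icc (φ x) (φ y) from ⟨by linarith, by linarith⟩)
  have := h z hz
  rw [hz0, abs_zero] at this
  linarith

theorem Convex.strictMonoOn_or_strictAntiOn_of_hasDerivWithinAt_ne_zero {D : Set ℝ}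
    (hD : Convex ℝ D) {f f' : ℝ → ℝ} (hf : ContinuousOn f D)
    (hf' : ∀ x ∈ interior D, HasDerivWithinAt f (f' x) (interior D) x)
    (hf'₀ : ∀ x ∈ interior D, f' x ≠ 0) : StrictMonoOn f D ∨ StrictAntiOn f D :=
  (hasDerivWithinAt_forall_lt_or_forall_gt_of_forall_ne hD.interior hf' hf'₀).symm.imp
    (strictMonoOn_of_hasDerivWithinAt_pos hD hf hf')
    (strictAntiOn_of_hasDerivWithinAt_neg hD hf hf')

theorem exists_mul_abs_sub_le_abs {a b C : ℝ} (hab : a ≤ b) {g : ℝ → ℝ}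
    (hg : ContinuousOn g (Icc a b))
    (hgrow : ∀ x ∈ Icc a b, ∀ y ∈ Icc a b, x ≤ y → C * (y - x) ≤ g y - g x) :
    ∃ x₀ ∈ Icc a b, ∀ x ∈ Icc a b, C * |x - x₀| ≤ |g x| := by
  have ha := left_mem_Icc.2 hab
  have hb := right_mem_Icc.2 hab
  by_cases hga : 0 ≤ g a
  · refine ⟨a, ha, fun x hx => ?_⟩
    rw [abs_of_nonneg (sub_nonneg.2 hx.1)]
    linarith [hgrow a ha x hx hx.1, le_abs_self (g x)]
  by_cases hgb : g b ≤ 0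
  · refine ⟨b, hb, fun x hx => ?_⟩
    rw [abs_of_nonpos (sub_nonpos.2 hx.2)]
    linarith [hgrow x hx b hb hx.2, neg_abs_le (g x)]
  obtain ⟨x₀, hx₀, hgx₀⟩ := intermediate_value_Icc hab hg
    (show (0 : ℝ) ∈ Icc (g a) (g b) from ⟨by linarith, by linarith⟩)
  refine ⟨x₀, hx₀, fun x hx => ?_⟩
  rcases le_total x₀ x with h | h
  · rw [abs_of_nonneg (sub_nonneg.2 h)]
    linarith [hgrow x₀ hx₀ x hx h, le_abs_self (g x)]
  · rw [abs_of_nonpos (sub_nonpos.2 h)]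
    linarith [hgrow x hx x₀ hx₀ h, neg_abs_le (g x)]

theorem mul_rpow_neg_one_div_add_one_rpow_neg_one_div {x k : ℝ} (hx : 0 < x) (hk : 0 < k) :
    (x * x ^ (-(1 / (k + 1)))) ^ (-(1 / k)) = x ^ (-(1 / (k + 1))) := by
  have h1 : 1 / (k + 1) < 1 := (div_lt_one (by linarith)).2 (by linarith)
  rw [← Real.rpow_one_add' hx.le (by linarith), ← Real.rpow_mul hx.le]
  congr 1
  field_simp
  ring

theorem iteratedDerivWithin_congr_set_of_mem_nhds {𝕜 F : Type*} [NontriviallyNormedField 𝕜]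
    [NormedAddCommGroup F] [NormedSpace 𝕜 F] {n : ℕ} {f : 𝕜 → F} {s t : Set 𝕜} {x : 𝕜}
    (hs : s ∈ 𝓝 x) (ht : t ∈ 𝓝 x) :
    iteratedDerivWithin n f s x = iteratedDerivWithin n f t x := by
  simp only [iteratedDerivWithin_eq_iteratedFDerivWithin, iteratedFDerivWithin_congr_set
    ((eventuallyEq_univ.2 hs).trans (eventuallyEq_univ.2 ht).symm)]

theorem Set.OrdConnected.setIntegral_eq_intervalIntegral {E : Type*} [NormedAddCommGroup E]
    [NormedSpace ℝ E] {T : Set ℝ} (hT : T.OrdConnected) (hne : T.Nonempty) (hbdd : BddBelow T)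
    (hbdd' : BddAbove T) (f : ℝ → E) :
    ∫ x in T, f x = ∫ x in sInf T..sSup T, f x := by
  have hae : T =ᵐ[volume] Ioo (sInf T) (sSup T) :=
    ((subset_Icc_csInf_csSup hbdd hbdd').eventuallyLE.trans Ioo_ae_eq_Icc.symm.le).antisymm
      ((IsConnected.Ioo_csInf_csSup_subset ⟨hne, hT.isPreconnected⟩ hbdd hbdd').eventuallyLE)
  rw [setIntegral_congr_set hae, intervalIntegral.integral_of_le (csInf_le_csSup hne hbdd hbdd'),
    integral_Ioc_eq_integral_Ioo]

theorem norm_setIntegral_le_of_ordConnected {E : Type*} [NormedAddCommGroup E] [NormedSpace ℝ E]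
    {a b B : ℝ} (hab : a ≤ b) {F : ℝ → E}
    (hB : ∀ u v, a ≤ u → u ≤ v → v ≤ b → ‖∫ t in u..v, F t‖ ≤ B) {T : Set ℝ}
    (hT : T.OrdConnected) (hTab : T ⊆ Icc a b) : ‖∫ t in T, F t‖ ≤ B := by
  rcases T.eq_empty_or_nonempty with rfl | hne
  · simpa using (norm_nonneg _).trans (hB a a le_rfl le_rfl hab)
  have hbelow : BddBelow T := bddBelow_Icc.mono hTab
  have habove : BddAbove T := bddAbove_Icc.mono hTab
  rw [hT.setIntegral_eq_intervalIntegral hne hbelow habove]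
  exact hB _ _ (le_csInf hne fun t ht => (hTab ht).1) (csInf_le_csSup hne hbelow habove)
    (csSup_le hne fun t ht => (hTab ht).2)

theorem norm_setIntegral_smul_le_of_quasiconcaveOn {E : Type*} [NormedAddCommGroup E]
    [NormedSpace ℝ E] [CompleteSpace E] {a b M B : ℝ} (hab : a < b) {h : ℝ → ℝ} {F : ℝ → E}
    (hh : QuasiconcaveOn ℝ (Ioo a b) h) (hh_meas : AEMeasurable h (volume.restrict (Ioo a b)))
    (hh_mem : MapsTo h (Ioo a b) (Icc 0 M)) (hF : IntegrableOn F (Ioo a b))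
    (hB : ∀ u v, a ≤ u → u ≤ v → v ≤ b → ‖∫ t in u..v, F t‖ ≤ B) :
    ‖∫ t in Ioo a b, h t • F t‖ ≤ M * B := by
  set A := Ioo a b
  set S := Ioc 0 M
  set f : ℝ → ℝ → E := fun t s => if s ≤ h t then F t else 0 with hf
  have hM : 0 ≤ M := by
    obtain ⟨t, ht⟩ := nonempty_Ioo.2 hab
    exact (hh_mem ht).1.trans (hh_mem ht).2
  -- layer cake: `h t` is the length of `{s ∈ (0, M] | s ≤ h t}`
  have hlayer : ∀ t ∈ A, h t • F t = ∫ s in S, f t s := by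
    intro t ht
    have : (fun s => f t s) = (Iic (h t)).indicator fun _ => F t := by
      ext s; simp [hf, Set.indicator_apply]
    rw [this, setIntegral_indicator measurableSet_Iic, setIntegral_const, Ioc_inter_Iic,
      min_eq_right (hh_mem ht).2, Real.volume_real_Ioc_of_le (hh_mem ht).1, sub_zero]
  have hint : Integrable (Function.uncurry f) ((volume.restrict A).prod (volume.restrict S)) := by
    have hset : NullMeasurableSet {p : ℝ × ℝ | p.2 ≤ h p.1}
        ((volume.restrict A).prod (volume.restrict S)) :=
      nullMeasurableSet_le measurable_snd.aemeasurable hh_meas.comp_fst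
    refine ((hF.comp_fst _).indicator₀ hset).congr (Eventually.of_forall fun p => ?_)
    simp [hf, Set.indicator_apply, Function.uncurry]
  have hlevel : ∀ s, ‖∫ t in A, f t s‖ ≤ B := by
    intro s
    set T := {t ∈ A | s ≤ h t}
    have hT : T.OrdConnected := (hh s).ordConnected
    have hTA : T ⊆ A := sep_subset _ _
    rw [setIntegral_congr_fun measurableSet_Ioo (g := T.indicator F) fun t ht => by
        simp [hf, T, Set.indicator_apply, show t ∈ A from ht],
      setIntegral_indicator hT.measurableSet, inter_eq_right.2 hTA]
    exact norm_setIntegral_le_of_ordConnected hab.le hB hT (hTA.trans Ioo_subset_Icc_self)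
  calc ‖∫ t in A, h t • F t‖ = ‖∫ s in S, ∫ t in A, f t s‖ := by
        rw [setIntegral_congr_fun measurableSet_Ioo hlayer, integral_integral_swap hint]
    _ ≤ B * volume.real S :=
        norm_setIntegral_le_of_norm_le_const measure_Ioc_lt_top fun s _ => hlevel s
    _ = M * B := by rw [Real.volume_real_Ioc_of_le hM, sub_zero, mul_comm]

noncomputable def oscillatoryIntegral (lam : ℝ) (ψ : ℝ → ℝ) (a b : ℝ) : ℂ :=
  ∫ t in a..b, Complex.exp (Complex.I * lam * (ψ t : ℂ))

theorem norm_cexp_I_mul_ofReal_mul (lam x : ℝ) : ‖Complex.exp (Complex.I * lam * x)‖ = 1 := by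
  rw [mul_assoc, ← Complex.ofReal_mul, Complex.norm_exp_I_mul_ofReal]

theorem oscillatoryIntegral_neg (lam : ℝ) (ψ : ℝ → ℝ) (a b : ℝ) :
    oscillatoryIntegral lam (-ψ) a b = starRingEnd ℂ (oscillatoryIntegral lam ψ a b) := by
  rw [oscillatoryIntegral, oscillatoryIntegral, ← intervalIntegral.intervalIntegral_conj]
  congr 1 with t
  rw [← Complex.exp_conj]
  simp only [map_mul, Complex.conj_I, Complex.conj_ofReal, Pi.neg_apply, Complex.ofReal_neg]
  ring_nf

theorem norm_oscillatoryIntegral_neg (lam : ℝ) (ψ : ℝ → ℝ) (a b : ℝ) :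
    ‖oscillatoryIntegral lam (-ψ) a b‖ = ‖oscillatoryIntegral lam ψ a b‖ := by
  rw [oscillatoryIntegral_neg, RCLike.norm_conj]

theorem norm_oscillatoryIntegral_le (lam : ℝ) (ψ : ℝ → ℝ) (a b : ℝ) :
    ‖oscillatoryIntegral lam ψ a b‖ ≤ |b - a| := by
  simpa [oscillatoryIntegral] using intervalIntegral.norm_integral_le_of_norm_le_const
    (C := 1) (f := fun t => Complex.exp (Complex.I * lam * (ψ t : ℂ))) (a := a) (b := b)
    fun t _ => (norm_cexp_I_mul_ofReal_mul lam (ψ t)).le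

theorem oscillatoryIntegral_add_adjacent {lam a b c : ℝ} {ψ : ℝ → ℝ} (hab : a ≤ b) (hbc : b ≤ c)
    (hψ : ContinuousOn ψ (Icc a c)) :
    oscillatoryIntegral lam ψ a b + oscillatoryIntegral lam ψ b c =
      oscillatoryIntegral lam ψ a c := by
  have hint : ∀ u v, a ≤ u → u ≤ v → v ≤ c → IntervalIntegrable
      (fun t => Complex.exp (Complex.I * lam * (ψ t : ℂ))) volume u v := fun u v hu huv hv =>
    ContinuousOn.intervalIntegrable (by
      rw [uIcc_of_le huv]
      exact (Complex.continuous_exp.comp_continuousOn (continuousOn_const.mul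
        (Complex.continuous_ofReal.comp_continuousOn hψ))).mono (Icc_subset_Icc hu hv))
  exact intervalIntegral.integral_add_adjacent_intervals (hint a b le_rfl hab hbc)
    (hint b c hab hbc le_rfl)

theorem norm_oscillatoryIntegral_le_of_monotoneOn_of_le_deriv {a b C lam : ℝ} (hab : a < b)
    (hC : 0 < C) (hlam : 0 < lam) {ψ φ : ℝ → ℝ} (hψ : ContinuousOn ψ (Icc a b))
    (hφ : ContinuousOn φ (Icc a b)) (hderiv : ∀ t ∈ Ioo a b, HasDerivAt ψ (φ t) t)
    (hmono : MonotoneOn φ (Ioo a b) ∨ AntitoneOn φ (Ioo a b)) (hφC : ∀ t ∈ Ioo a b, C ≤ φ t) :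
    ‖oscillatoryIntegral lam ψ a b‖ ≤ 2 / (lam * C) := by
  set G : ℝ → ℂ := fun t => Complex.exp (Complex.I * lam * (ψ t : ℂ))
  set F : ℝ → ℂ := fun t => G t * (Complex.I * lam * (φ t : ℂ))
  set h : ℝ → ℝ := fun t => (lam * φ t)⁻¹
  have hG : ContinuousOn G (Icc a b) := Complex.continuous_exp.comp_continuousOn
    (continuousOn_const.mul (Complex.continuous_ofReal.comp_continuousOn hψ))
  have hF : ContinuousOn F (Icc a b) := hG.mul (continuousOn_const.mul
    (Complex.continuous_ofReal.comp_continuousOn hφ))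
  have hGF : ∀ t ∈ Ioo a b, HasDerivAt G (F t) t := fun t ht =>
    ((hderiv t ht).ofReal_comp.const_mul (Complex.I * lam)).cexp
  have hpos : ∀ t ∈ Ioo a b, 0 < lam * φ t := fun t ht => mul_pos hlam (hC.trans_le (hφC t ht))
  have hh : QuasiconcaveOn ℝ (Ioo a b) h := by
    rcases hmono with hm | hm
    · refine AntitoneOn.quasiconcaveOn (fun x hx y hy hxy => ?_) (convex_Ioo a b)
      exact inv_anti₀ (hpos x hx) (mul_le_mul_of_nonneg_left (hm hx hy hxy) hlam.le)
    · refine MonotoneOn.quasiconcaveOn (fun x hx y hy hxy => ?_) (convex_Ioo a b)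
      exact inv_anti₀ (hpos y hy) (mul_le_mul_of_nonneg_left (hm hx hy hxy) hlam.le)
  have hh_mem : MapsTo h (Ioo a b) (Icc 0 (lam * C)⁻¹) := fun t ht =>
    ⟨(inv_pos.2 (hpos t ht)).le,
      inv_anti₀ (mul_pos hlam hC) (mul_le_mul_of_nonneg_left (hφC t ht) hlam.le)⟩
  have hh_meas : AEMeasurable h (volume.restrict (Ioo a b)) :=
    ((continuousOn_const.mul (hφ.mono Ioo_subset_Icc_self)).inv₀ fun t ht =>
      (hpos t ht).ne').aemeasurable measurableSet_Ioo
  -- `F = G'` with `‖G‖ = 1`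
  have hB : ∀ u v, a ≤ u → u ≤ v → v ≤ b → ‖∫ t in u..v, F t‖ ≤ 2 := by
    intro u v hu huv hv
    have hsub : Icc u v ⊆ Icc a b := Icc_subset_Icc hu hv
    rw [intervalIntegral.integral_eq_sub_of_hasDerivAt_of_le huv (hG.mono hsub)
      (fun t ht => hGF t (Ioo_subset_Ioo hu hv ht))
      ((hF.mono (by rwa [uIcc_of_le huv])).intervalIntegrable)]
    refine (norm_sub_le _ _).trans_eq ?_
    rw [norm_cexp_I_mul_ofReal_mul, norm_cexp_I_mul_ofReal_mul]
    norm_num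
  have hGhF : ∀ t ∈ Ioo a b, G t = -Complex.I * (h t • F t) := by
    intro t ht
    have hlam0 : (lam : ℂ) ≠ 0 := by exact_mod_cast hlam.ne'
    have hφ0 : (φ t : ℂ) ≠ 0 := by exact_mod_cast (hC.trans_le (hφC t ht)).ne'
    simp only [h, F, Complex.real_smul, Complex.ofReal_inv, Complex.ofReal_mul]
    field_simp
    rw [Complex.I_sq]
    ring
  have hmain := norm_setIntegral_smul_le_of_quasiconcaveOn hab hh hh_meas hh_mem
    ((hF.integrableOn_Icc).mono_set Ioo_subset_Icc_self) hB
  calc ‖oscillatoryIntegral lam ψ a b‖ = ‖∫ t in Ioo a b, -Complex.I * (h t • F t)‖ := by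
        rw [oscillatoryIntegral, intervalIntegral.integral_of_le hab.le,
          integral_Ioc_eq_integral_Ioo, setIntegral_congr_fun measurableSet_Ioo hGhF]
    _ ≤ (lam * C)⁻¹ * 2 := by
        rw [integral_const_mul, norm_mul, norm_neg, Complex.norm_I, one_mul]
        exact hmain
    _ = 2 / (lam * C) := by ring

theorem norm_oscillatoryIntegral_le_of_monotoneOn {a b C lam : ℝ} (hab : a < b) (hC : 0 < C)
    (hlam : 0 < lam) {ψ φ : ℝ → ℝ} (hψ : ContinuousOn ψ (Icc a b))
    (hφ : ContinuousOn φ (Icc a b)) (hderiv : ∀ t ∈ Ioo a b, HasDerivAt ψ (φ t) t)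
    (hmono : MonotoneOn φ (Ioo a b) ∨ AntitoneOn φ (Ioo a b)) (hφC : ∀ t ∈ Ioo a b, C ≤ |φ t|) :
    ‖oscillatoryIntegral lam ψ a b‖ ≤ 2 / (lam * C) := by
  rcases forall_le_or_forall_le_neg_of_le_abs isPreconnected_Ioo
    (hφ.mono Ioo_subset_Icc_self) hC hφC with hpos | hneg
  · exact norm_oscillatoryIntegral_le_of_monotoneOn_of_le_deriv hab hC hlam hψ hφ hderiv hmono hpos
  · rw [← norm_oscillatoryIntegral_neg]
    exact norm_oscillatoryIntegral_le_of_monotoneOn_of_le_deriv hab hC hlam hψ.neg hφ.neg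
      (fun t ht => (hderiv t ht).neg) (hmono.symm.imp AntitoneOn.neg MonotoneOn.neg)
      fun t ht => le_neg.1 (hneg t ht)

theorem norm_oscillatoryIntegral_le_of_subsingleton_deriv_deriv_eq_zero {a b C lam : ℝ}
    (hab : a < b) (hC : 0 < C) (hlam : 0 < lam) {ψ : ℝ → ℝ} (hψ : ContDiffOn ℝ 1 ψ (Icc a b))
    (hder : ∀ x ∈ Ioo a b, C ≤ |derivWithin ψ (Icc a b) x|)
    (hsub : {x ∈ Ioo a b | deriv (deriv ψ) x = 0}.Subsingleton) :
    ‖oscillatoryIntegral lam ψ a b‖ ≤ 4 / (lam * C) := by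
  set φ := derivWithin ψ (Icc a b)
  have hφ : ContinuousOn φ (Icc a b) := hψ.continuousOn_derivWithin (uniqueDiffOn_Icc hab) le_rfl
  have hφ_eq : ∀ x ∈ Ioo a b, φ =ᶠ[𝓝 x] deriv ψ := fun x hx =>
    eventually_of_mem (Ioo_mem_nhds hx.1 hx.2) fun y hy =>
      derivWithin_of_mem_nhds (Icc_mem_nhds hy.1 hy.2)
  have hderiv : ∀ t ∈ Ioo a b, HasDerivAt ψ (φ t) t := fun t ht =>
    (hψ.differentiableOn one_ne_zero t (Ioo_subset_Icc_self ht)).hasDerivWithinAt.hasDerivAt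
      (Icc_mem_nhds ht.1 ht.2)
  have hpiece : ∀ u v, a ≤ u → u < v → v ≤ b → (∀ x ∈ Ioo u v, deriv (deriv ψ) x ≠ 0) →
      ‖oscillatoryIntegral lam ψ u v‖ ≤ 2 / (lam * C) := by
    intro u v hu huv hv hne
    have hsub : Icc u v ⊆ Icc a b := Icc_subset_Icc hu hv
    have hsub' : Ioo u v ⊆ Ioo a b := Ioo_subset_Ioo hu hv
    have hmono := (convex_Icc u v).strictMonoOn_or_strictAntiOn_of_hasDerivWithinAt_ne_zero
      (hφ.mono hsub) (f' := deriv (deriv ψ)) (fun x hx => by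
        rw [interior_Icc] at hx ⊢
        -- `deriv` is junk `0` where `ψ'` is not differentiable, so `ψ'' x ≠ 0` excludes that
        exact (differentiableAt_of_deriv_ne_zero (hne x hx)).hasDerivAt.congr_of_eventuallyEq
          (hφ_eq x (hsub' hx)) |>.hasDerivWithinAt)
      (by rw [interior_Icc]; exact hne)
    exact norm_oscillatoryIntegral_le_of_monotoneOn huv hC hlam (hψ.continuousOn.mono hsub)
      (hφ.mono hsub) (fun t ht => hderiv t (hsub' ht))
      (hmono.imp (fun h => h.monotoneOn.mono Ioo_subset_Icc_self)
        fun h => h.antitoneOn.mono Ioo_subset_Icc_self)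
      fun t ht => hder t (hsub' ht)
  obtain ⟨m, hm, hm_ne⟩ : ∃ m ∈ Ioo a b, ∀ x ∈ Ioo a b, x ≠ m → deriv (deriv ψ) x ≠ 0 := by
    rcases {x ∈ Ioo a b | deriv (deriv ψ) x = 0}.eq_empty_or_nonempty with he | ⟨m, hm, hm0⟩
    · refine ⟨(a + b) / 2, ⟨by linarith, by linarith⟩, fun x hx _ hx0 => ?_⟩
      exact he.subset ⟨hx, hx0⟩
    · exact ⟨m, hm, fun x hx hxm hx0 => hxm (hsub ⟨hx, hx0⟩ ⟨hm, hm0⟩)⟩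
  rw [← oscillatoryIntegral_add_adjacent hm.1.le hm.2.le hψ.continuousOn]
  calc _ ≤ ‖oscillatoryIntegral lam ψ a m‖ + ‖oscillatoryIntegral lam ψ m b‖ := norm_add_le _ _
    _ ≤ 2 / (lam * C) + 2 / (lam * C) := add_le_add
        (hpiece a m le_rfl hm.1 hm.2.le fun x hx => hm_ne x ⟨hx.1, hx.2.trans hm.2⟩ hx.2.ne)
        (hpiece m b hm.1.le hm.2 le_rfl fun x hx => hm_ne x ⟨hm.1.trans hx.1, hx.2⟩ hx.1.ne')
    _ = 4 / (lam * C) := by ring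

theorem norm_oscillatoryIntegral_le_of_mul_sub_le_sub {a b C δ B lam : ℝ} (hab : a ≤ b)
    (hC : 0 ≤ C) (hδ : 0 ≤ δ) (hB : 0 ≤ B) {ψ g : ℝ → ℝ} (hψ : ContinuousOn ψ (Icc a b))
    (hg : ContinuousOn g (Icc a b))
    (hgrow : ∀ x ∈ Icc a b, ∀ y ∈ Icc a b, x ≤ y → C * (y - x) ≤ g y - g x)
    (hside : ∀ p q, a ≤ p → p < q → q ≤ b → (∀ x ∈ Ioo p q, C * δ ≤ |g x|) →
      ‖oscillatoryIntegral lam ψ p q‖ ≤ B) :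
    ‖oscillatoryIntegral lam ψ a b‖ ≤ 2 * B + 2 * δ := by
  obtain ⟨x₀, hx₀, hgx₀⟩ := exists_mul_abs_sub_le_abs hab hg hgrow
  have hside' : ∀ p q, a ≤ p → p ≤ q → q ≤ b → (∀ x ∈ Ioo p q, C * δ ≤ |g x|) →
      ‖oscillatoryIntegral lam ψ p q‖ ≤ B := by
    intro p q hp hpq hq h
    rcases hpq.eq_or_lt with rfl | hpq
    · simpa [oscillatoryIntegral] using hB
    · exact hside p q hp hpq hq h
  have hfar : ∀ x ∈ Icc a b, δ ≤ |x - x₀| → C * δ ≤ |g x| := fun x hx h =>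
    (mul_le_mul_of_nonneg_left h hC).trans (hgx₀ x hx)
  -- `|g| ≥ C δ` outside `[x₀ - δ, x₀ + δ]`
  set u := max a (x₀ - δ)
  set v := min b (x₀ + δ)
  have hau : a ≤ u := le_max_left _ _
  have hvb : v ≤ b := min_le_left _ _
  have huv : u ≤ v := max_le (le_min hab (by linarith [hx₀.1])) (le_min (by linarith [hx₀.2])
    (by linarith))
  have hleft := hside' a u le_rfl hau (huv.trans hvb) fun x hx => by
    have : x < x₀ - δ := (lt_max_iff.1 hx.2).resolve_left hx.1.not_gt
    exact hfar x ⟨hx.1.le, (hx.2.trans_le (huv.trans hvb)).le⟩ (by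
      rw [abs_of_nonpos (by linarith)]; linarith)
  have hright := hside' v b (hau.trans huv) hvb le_rfl fun x hx => by
    have : x₀ + δ < x := (min_lt_iff.1 hx.1).resolve_left hx.2.not_gt
    exact hfar x ⟨((hau.trans huv).trans_lt hx.1).le, hx.2.le⟩ (by
      rw [abs_of_nonneg (by linarith)]; linarith)
  have hmid : ‖oscillatoryIntegral lam ψ u v‖ ≤ 2 * δ := by
    refine (norm_oscillatoryIntegral_le lam ψ u v).trans ?_
    rw [abs_of_nonneg (sub_nonneg.2 huv)]
    linarith [le_max_right a (x₀ - δ), min_le_right b (x₀ + δ)]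
  rw [← oscillatoryIntegral_add_adjacent hau (huv.trans hvb) hψ,
    ← oscillatoryIntegral_add_adjacent huv hvb (hψ.mono (Icc_subset_Icc hau le_rfl))]
  linarith [norm_add_le (oscillatoryIntegral lam ψ a u)
    (oscillatoryIntegral lam ψ u v + oscillatoryIntegral lam ψ v b),
    norm_add_le (oscillatoryIntegral lam ψ u v) (oscillatoryIntegral lam ψ v b)]

def MonotoneVanDerCorputBound (k : ℕ) (c : ℝ) : Prop :=
  ∀ ⦃a b : ℝ⦄, a < b → ∀ ⦃ψ : ℝ → ℝ⦄ ⦃C : ℝ⦄, 0 < C → ContDiffOn ℝ k ψ (Icc a b) →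
    (∀ x ∈ Ioo a b, C ≤ |iteratedDerivWithin k ψ (Icc a b) x|) →
    (MonotoneOn (iteratedDerivWithin k ψ (Icc a b)) (Ioo a b) ∨
      AntitoneOn (iteratedDerivWithin k ψ (Icc a b)) (Ioo a b)) →
    ∀ ⦃lam : ℝ⦄, 0 < lam → ‖oscillatoryIntegral lam ψ a b‖ ≤ c * (lam * C) ^ (-(1 / (k : ℝ)))

theorem monotoneVanDerCorputBound_one : MonotoneVanDerCorputBound 1 2 := by
  intro a b hab ψ C hC hψ hder hmono lam hlam
  have hUD := uniqueDiffOn_Icc hab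
  have hderiv : ∀ t ∈ Ioo a b, HasDerivAt ψ (iteratedDerivWithin 1 ψ (Icc a b) t) t := by
    intro t ht
    rw [iteratedDerivWithin_one]
    exact (hψ.differentiableOn one_ne_zero t (Ioo_subset_Icc_self ht)).hasDerivWithinAt.hasDerivAt
      (Icc_mem_nhds ht.1 ht.2)
  have := norm_oscillatoryIntegral_le_of_monotoneOn hab hC hlam hψ.continuousOn
    (hψ.continuousOn_iteratedDerivWithin le_rfl hUD) hderiv hmono hder
  simpa [Real.rpow_neg_one, div_eq_mul_inv] using this

theorem norm_oscillatoryIntegral_le_of_le_iteratedDerivWithin_succ {k : ℕ} (hk : 0 < k) {c : ℝ}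
    (hc : 0 ≤ c) (hbound : MonotoneVanDerCorputBound k c) {a b C lam : ℝ} (hab : a < b)
    (hC : 0 < C) (hlam : 0 < lam) {ψ : ℝ → ℝ} (hψ : ContDiffOn ℝ (k + 1 : ℕ) ψ (Icc a b))
    (hder : ∀ x ∈ Ioo a b, C ≤ iteratedDerivWithin (k + 1) ψ (Icc a b) x) :
    ‖oscillatoryIntegral lam ψ a b‖ ≤ (2 * c + 2) * (lam * C) ^ (-(1 / ((k + 1 : ℕ) : ℝ))) := by
  have hUD := uniqueDiffOn_Icc hab
  set g := iteratedDerivWithin k ψ (Icc a b)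
  set δ := (lam * C) ^ (-(1 / ((k + 1 : ℕ) : ℝ)))
  have hδ : 0 < δ := Real.rpow_pos_of_pos (mul_pos hlam hC) _
  have hg : ContinuousOn g (Icc a b) :=
    hψ.continuousOn_iteratedDerivWithin (by norm_cast; omega) hUD
  have hgrow : ∀ x ∈ Icc a b, ∀ y ∈ Icc a b, x ≤ y → C * (y - x) ≤ g y - g x := by
    refine (convex_Icc a b).mul_sub_le_image_sub_of_le_deriv hg
      ((hψ.differentiableOn_iteratedDerivWithin (by norm_cast; omega) hUD).mono interior_subset)
      fun x hx => ?_
    rw [interior_Icc] at hx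
    rw [← derivWithin_of_mem_nhds (Icc_mem_nhds hx.1 hx.2), ← iteratedDerivWithin_succ]
    exact hder x hx
  have hg_mono : MonotoneOn g (Icc a b) := fun x hx y hy hxy => by
    nlinarith [hgrow x hx y hy hxy]
  have hside : ∀ p q, a ≤ p → p < q → q ≤ b → (∀ x ∈ Ioo p q, C * δ ≤ |g x|) →
      ‖oscillatoryIntegral lam ψ p q‖ ≤ c * δ := by
    intro p q hp hpq hq hgδ
    have hsub : Ioo p q ⊆ Ioo a b := Ioo_subset_Ioo hp hq
    have heq : EqOn (iteratedDerivWithin k ψ (Icc p q)) g (Ioo p q) := fun x hx =>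
      iteratedDerivWithin_congr_set_of_mem_nhds (Icc_mem_nhds hx.1 hx.2)
        (Icc_mem_nhds (hsub hx).1 (hsub hx).2)
    have := hbound hpq (mul_pos hC hδ)
      ((hψ.of_le (by norm_cast; omega)).mono (Icc_subset_Icc hp hq))
      (fun x hx => (heq hx).symm ▸ hgδ x hx)
      (Or.inl ((hg_mono.mono ((Ioo_subset_Icc_self).trans (Icc_subset_Icc hp hq))).congr
        heq.symm)) hlam
    have hδk : (lam * C * δ) ^ (-(1 / (k : ℝ))) = δ := by
      simp only [δ, Nat.cast_succ]
      exact mul_rpow_neg_one_div_add_one_rpow_neg_one_div (mul_pos hlam hC) (by exact_mod_cast hk)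
    rwa [← mul_assoc, hδk] at this
  have := norm_oscillatoryIntegral_le_of_mul_sub_le_sub hab.le hC.le hδ.le
    (mul_nonneg hc hδ.le) hψ.continuousOn hg hgrow hside
  linarith

theorem norm_oscillatoryIntegral_le_of_le_abs_iteratedDerivWithin_succ {k : ℕ} (hk : 0 < k)
    {c : ℝ} (hc : 0 ≤ c) (hbound : MonotoneVanDerCorputBound k c) {a b C lam : ℝ} (hab : a < b)
    (hC : 0 < C) (hlam : 0 < lam) {ψ : ℝ → ℝ} (hψ : ContDiffOn ℝ (k + 1 : ℕ) ψ (Icc a b))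
    (hder : ∀ x ∈ Ioo a b, C ≤ |iteratedDerivWithin (k + 1) ψ (Icc a b) x|) :
    ‖oscillatoryIntegral lam ψ a b‖ ≤ (2 * c + 2) * (lam * C) ^ (-(1 / ((k + 1 : ℕ) : ℝ))) := by
  rcases forall_le_or_forall_le_neg_of_le_abs isPreconnected_Ioo
    ((hψ.continuousOn_iteratedDerivWithin le_rfl (uniqueDiffOn_Icc hab)).mono
      Ioo_subset_Icc_self) hC hder with hpos | hneg
  · exact norm_oscillatoryIntegral_le_of_le_iteratedDerivWithin_succ hk hc hbound hab hC hlam hψ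
      hpos
  · rw [← norm_oscillatoryIntegral_neg]
    refine norm_oscillatoryIntegral_le_of_le_iteratedDerivWithin_succ hk hc hbound hab hC hlam
      hψ.neg fun x hx => ?_
    rw [iteratedDerivWithin_neg]
    exact le_neg.1 (hneg x hx)

theorem exists_monotoneVanDerCorputBound {k : ℕ} (hk : 1 ≤ k) :
    ∃ c, 0 ≤ c ∧ MonotoneVanDerCorputBound k c := by
  induction k, hk using Nat.le_induction with
  | base => exact ⟨2, zero_le_two, monotoneVanDerCorputBound_one⟩
  | succ k hk ih =>
    obtain ⟨c, hc, hbound⟩ := ih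
    exact ⟨2 * c + 2, by positivity, fun a b hab ψ C hC hψ hder _ lam hlam =>
      norm_oscillatoryIntegral_le_of_le_abs_iteratedDerivWithin_succ hk hc hbound hab hC hlam hψ
        hder⟩

/-- Van der Corput's lemma: if `ψ ∈ C^k([a,b])` with `|ψ^{(k)}| ≥ C > 0` on `(a,b)`,
and either `k = 1` together with `ψ''` having at most one zero in `(a,b)`, or `k ≥ 2`,
then `|∫_a^b e^{iλψ(t)} dt| ≤ c_k (λC)^{-1/k}` with `c_k` depending only on `k`. -/
theorem van_der_corput (k : ℕ) (hk : 1 ≤ k) :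
    ∃ c : ℝ, 0 < c ∧
      ∀ (a b : ℝ), a < b → ∀ (ψ : ℝ → ℝ) (C : ℝ), 0 < C →
        ContDiffOn ℝ k ψ (Set.Icc a b) →
        (∀ x ∈ Set.Ioo a b, C ≤ |iteratedDerivWithin k ψ (Set.Icc a b) x|) →
        ((k = 1 ∧ {x ∈ Set.Ioo a b | deriv (deriv ψ) x = 0}.Subsingleton) ∨ 2 ≤ k) →
        ∀ lam : ℝ, 0 < lam →
          ‖∫ t in a..b, Complex.exp (Complex.I * lam * (ψ t : ℂ))‖
            ≤ c * (lam * C) ^ (-(1 / (k : ℝ))) := by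
  obtain rfl | ⟨j, hj, rfl⟩ : k = 1 ∨ ∃ j, 1 ≤ j ∧ k = j + 1 :=
    hk.eq_or_lt'.imp id fun h => ⟨k - 1, by omega, by omega⟩
  · refine ⟨4, by norm_num, fun a b hab ψ C hC hψ hder hcase lam hlam => ?_⟩
    have hsub := (hcase.resolve_right (by norm_num)).2
    simp only [iteratedDerivWithin_one] at hder
    calc _ = ‖oscillatoryIntegral lam ψ a b‖ := rfl
      _ ≤ 4 / (lam * C) :=
        norm_oscillatoryIntegral_le_of_subsingleton_deriv_deriv_eq_zero hab hC hlam hψ hder hsub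
      _ = 4 * (lam * C) ^ (-(1 / ((1 : ℕ) : ℝ))) := by simp [Real.rpow_neg_one, div_eq_mul_inv]
  · obtain ⟨c, hc, hbound⟩ := exists_monotoneVanDerCorputBound hj
    exact ⟨2 * c + 2, by positivity, fun a b hab ψ C hC hψ hder _ lam hlam =>
      norm_oscillatoryIntegral_le_of_le_abs_iteratedDerivWithin_succ hj hc hbound hab hC hlam hψ
        hder⟩
end

section
/- Let b₀, b₁, …, b_n be distinct nonzero real numbers. Then there exists a constant C₁ > 0, depending only on b₀, b₁, …, b_n, such that for all real parameters μ₁, …, μ_n and every t > 0, the function φ(t) = t^{b₀} + μ₁ t^{b₁} + ⋯ + μ_n t^{b_n} satisfies |φ^{(k)}(t)| ≥ C₁ · t^{b₀ − k} for at least one k ∈ {1, …, n+1}. -/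
/-!
Put `μ₀ = 1` and `w_i = μ_i t^{b_i - b₀}`. Since `(d/dt)^k t^β = β(β-1)⋯(β-k+1) t^{β-k}`,
`t^{k-b₀} φ^{(k)}(t) = ∑_i b_i(b_i-1)⋯(b_i-k+1) w_i`, so the normalised derivatives of orders
`1, …, n+1` form the vector `M w`, where `M` does not depend on `μ` or `t`. Factoring `b_i` out of
column `i` leaves a matrix of monic polynomials of degrees `0, …, n` evaluated at the `b_i`, whose
determinant is the Vandermonde determinant; hence `M` is invertible. As `w₀ = 1`, reading `w₀` off
`M⁻¹ (M w)` gives `1 ≤ (∑_k |M⁻¹₀ₖ|) · max_k |(M w)_k|`.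
-/

open Real Polynomial Matrix

theorem iteratedDeriv_sum_mul_rpow {ι : Type*} (s : Finset ι) (a b : ι → ℝ) (k : ℕ) {t : ℝ}
    (ht : t ≠ 0) :
    iteratedDeriv k (fun x => ∑ i ∈ s, a i * x ^ b i) t =
      ∑ i ∈ s, a i * (descPochhammer ℝ k).eval (b i) * t ^ (b i - k) := by
  rw [iteratedDeriv_fun_sum fun i _ => contDiffAt_const.mul (contDiffAt_rpow_const (Or.inl ht))]
  refine Finset.sum_congr rfl fun i _ => ?_
  rw [iteratedDeriv_const_mul_field, iteratedDeriv_eq_iterate, iter_deriv_rpow_const, mul_assoc]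

theorem det_of_eval_descPochhammer_succ {R : Type*} [CommRing R] [IsDomain R] {m : ℕ}
    (b : Fin m → R) :
    (of fun k i : Fin m => (descPochhammer R (k + 1)).eval (b i)).det =
      (∏ i, b i) * (vandermonde b).det := by
  have hX : (X - 1 : R[X]).natDegree = 1 := by simpa using natDegree_X_sub_C (1 : R)
  set p : Fin m → R[X] := fun k => (descPochhammer R k).comp (X - 1)
  have hp_monic : ∀ k, (p k).Monic := fun k =>
    (monic_descPochhammer R k).comp (by simpa using monic_X_sub_C (1 : R))
      (by rw [hX]; exact one_ne_zero)
  have hp_deg : ∀ k, (p k).natDegree = k := fun k => by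
    simp [p, natDegree_comp, hX]
  have hfactor : (of fun k i : Fin m => (descPochhammer R (k + 1)).eval (b i)) =
      (of fun i k => (p k).eval (b i))ᵀ * diagonal b := by
    ext k i
    simp [p, descPochhammer_succ_left, mul_diagonal, mul_comm]
  rw [hfactor, det_mul, det_transpose, det_diagonal,
    ← det_eval_matrixOfPolynomials_eq_det_vandermonde b p hp_deg hp_monic, mul_comm]

theorem exists_pos_le_abs_mulVec {m : Type*} [Fintype m] [DecidableEq m]
    (M : Matrix m m ℝ) (hM : IsUnit M.det) (i₀ : m) :
    ∃ C > 0, ∀ w : m → ℝ, w i₀ = 1 → ∃ k, C ≤ |(M *ᵥ w) k| := by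
  have : Nonempty m := ⟨i₀⟩
  set A := ∑ j, |M⁻¹ i₀ j|
  have one_le_mul_abs_mulVec : ∀ w : m → ℝ, w i₀ = 1 → ∃ k, 1 ≤ A * |(M *ᵥ w) k| := by
    intro w hw
    obtain ⟨k, hk⟩ := Finite.exists_max fun k => |(M *ᵥ w) k|
    refine ⟨k, ?_⟩
    calc (1 : ℝ) = |(M⁻¹ *ᵥ (M *ᵥ w)) i₀| := by
          rw [mulVec_mulVec, nonsing_inv_mul M hM, one_mulVec, hw, abs_one]
      _ ≤ ∑ j, |M⁻¹ i₀ j| * |(M *ᵥ w) j| := by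
          simpa only [mulVec, dotProduct, abs_mul] using
            Finset.abs_sum_le_sum_abs (fun j => M⁻¹ i₀ j * (M *ᵥ w) j) Finset.univ
      _ ≤ A * |(M *ᵥ w) k| := by
          rw [Finset.sum_mul]
          exact Finset.sum_le_sum fun j _ => mul_le_mul_of_nonneg_left (hk j) (abs_nonneg _)
  have hA : 0 < A := by
    obtain ⟨k, hk⟩ := one_le_mul_abs_mulVec (Pi.single i₀ 1) (by simp)
    have : 0 ≤ A := Finset.sum_nonneg fun j _ => abs_nonneg _
    exact this.lt_of_ne (by rintro h; rw [← h, zero_mul] at hk; linarith)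
  refine ⟨A⁻¹, inv_pos.mpr hA, fun w hw => ?_⟩
  obtain ⟨k, hk⟩ := one_le_mul_abs_mulVec w hw
  exact ⟨k, by rwa [inv_le_iff_one_le_mul₀' hA]⟩

/-- For a phase `φ(t) = t^{b₀} + μ₁ t^{b₁} + ⋯ + μ_n t^{b_n}` with distinct nonzero
real exponents, some derivative `φ^{(k)}`, `1 ≤ k ≤ n+1`, satisfies the lower bound
`|φ^{(k)}(t)| ≥ C₁ t^{b₀ - k}`, uniformly in the parameters `μ` and in `t > 0`. -/
theorem derivative_lower_bound
    (n : ℕ) (b : Fin (n + 1) → ℝ)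
    (hb_inj : Function.Injective b) (hb_ne : ∀ i, b i ≠ 0) :
    ∃ C₁ : ℝ, 0 < C₁ ∧
      ∀ (μ : Fin n → ℝ) (t : ℝ), 0 < t →
        ∃ k : ℕ, 1 ≤ k ∧ k ≤ n + 1 ∧
          C₁ * t ^ (b 0 - k) ≤
            |iteratedDeriv k
              (fun s : ℝ => s ^ (b 0) + ∑ i : Fin n, μ i * s ^ (b i.succ)) t| := by
  set M : Matrix (Fin (n + 1)) (Fin (n + 1)) ℝ :=
    of fun k i => (descPochhammer ℝ (k + 1)).eval (b i)
  have hM : IsUnit M.det := by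
    rw [isUnit_iff_ne_zero, det_of_eval_descPochhammer_succ]
    exact mul_ne_zero (Finset.prod_ne_zero_iff.mpr fun i _ => hb_ne i)
      (det_vandermonde_ne_zero_iff.mpr hb_inj)
  obtain ⟨C₁, hC₁, hM_bound⟩ := exists_pos_le_abs_mulVec M hM 0
  refine ⟨C₁, hC₁, fun μ t ht => ?_⟩
  set a : Fin (n + 1) → ℝ := Fin.cons 1 μ
  set w : Fin (n + 1) → ℝ := fun i => a i * t ^ (b i - b 0)
  obtain ⟨k, hk⟩ := hM_bound w (by simp [w, a])
  refine ⟨k + 1, by omega, by omega, ?_⟩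
  have hφ : (fun s : ℝ => s ^ (b 0) + ∑ i : Fin n, μ i * s ^ (b i.succ)) =
      fun s => ∑ i, a i * s ^ b i := by
    simp [a, Fin.sum_univ_succ]
  have hderiv : iteratedDeriv (k + 1) (fun s => ∑ i, a i * s ^ b i) t =
      (M *ᵥ w) k * t ^ (b 0 - (k + 1 : ℕ)) := by
    rw [iteratedDeriv_sum_mul_rpow _ _ _ _ ht.ne', mulVec, dotProduct, Finset.sum_mul]
    refine Finset.sum_congr rfl fun i _ => ?_
    rw [show t ^ (b i - (k + 1 : ℕ)) = t ^ (b i - b 0) * t ^ (b 0 - (k + 1 : ℕ)) by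
      rw [← rpow_add ht]; ring_nf]
    simp only [M, w, of_apply]
    ring
  rw [hφ, hderiv, abs_mul, abs_of_pos (rpow_pos_of_pos ht _)]
  exact mul_le_mul_of_nonneg_right hk (rpow_pos_of_pos ht _).le
end

section
/- Let γ : ℝ → ℝ^d be a smooth well-curved curve. Then there exists a constant nonsingular (invertible) d × d matrix M such that the curve t ↦ M γ(t) is of standard type. -/
open MeasureTheory Real Filter
open scoped Topology ENNReal

/-- A smooth curve `γ : ℝ → ℝ^d` is *well-curved* if `γ(0) = 0` and the derivatives
`γ^{(k)}(0)`, `k ≥ 1`, span `ℝ^d`. -/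
def IsWellCurved (d : ℕ) (γ : ℝ → Fin d → ℝ) : Prop :=
  ContDiff ℝ (⊤ : ℕ∞) γ ∧ γ 0 = 0 ∧
    Submodule.span ℝ (Set.range fun k : ℕ => iteratedDeriv (k + 1) γ 0) = ⊤

/-- A smooth curve `γ : ℝ → ℝ^d` is of *standard type* if there are integers
`1 ≤ a₁ < ⋯ < a_d` with `γ_k(t) = t^{a_k}/a_k! + higher order terms`, i.e.
`γ_k^{(m)}(0) = 0` for `m < a_k` and `γ_k^{(a_k)}(0) = 1`. -/
def IsStandardType (d : ℕ) (γ : ℝ → Fin d → ℝ) : Prop :=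
  ContDiff ℝ (⊤ : ℕ∞) γ ∧
    ∃ a : Fin d → ℕ, StrictMono a ∧ (∀ k, 1 ≤ a k) ∧
      ∀ k : Fin d,
        (∀ m : ℕ, m < a k → iteratedDeriv m (fun t => γ t k) 0 = 0) ∧
        iteratedDeriv (a k) (fun t => γ t k) 0 = 1

/-- Composition with a continuous linear map on the left commutes with `iteratedDeriv`. -/
lemma iteratedDeriv_clm_comp_aux {F G : Type*} [NormedAddCommGroup F] [NormedSpace ℝ F]
    [NormedAddCommGroup G] [NormedSpace ℝ G]
    (g : F →L[ℝ] G) {f : ℝ → F} (hf : ContDiff ℝ (⊤ : ℕ∞) f) (n : ℕ) (x : ℝ) :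
    iteratedDeriv n (fun t => g (f t)) x = g (iteratedDeriv n f x) := by
  rw [iteratedDeriv_eq_iteratedFDeriv, iteratedDeriv_eq_iteratedFDeriv,
    show (fun t => g (f t)) = g ∘ f from rfl,
    g.iteratedFDeriv_comp_left hf.contDiffAt (by exact_mod_cast (le_top : (n : ℕ∞) ≤ ⊤))]
  rfl

/-- A family each of whose members avoids the span of the earlier members is
linearly independent. -/
lemma linearIndependent_of_not_mem_span_earlier_aux {V : Type*} [AddCommGroup V] [Module ℝ V] :
    ∀ {n : ℕ} (w : Fin n → V),
      (∀ j, w j ∉ Submodule.span ℝ (w '' {i | i < j})) → LinearIndependent ℝ w := by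
  intro n
  induction n with
  | zero => intro w _; exact linearIndependent_empty_type
  | succ n ih =>
    intro w h
    rw [← Fin.snoc_init_self w]
    refine linearIndependent_fin_snoc.mpr
      ⟨ih (Fin.init w) fun j hj => h j.castSucc ?_, fun hc => h (Fin.last n) ?_⟩
    · refine Submodule.span_mono ?_ hj
      rintro x ⟨i, hi, rfl⟩
      exact ⟨i.castSucc, by simpa using hi, rfl⟩
    · refine Submodule.span_mono ?_ hc
      rintro x ⟨i, rfl⟩
      exact ⟨i.castSucc, Fin.castSucc_lt_last i, rfl⟩

/-- Every smooth well-curved curve `γ` in `ℝ^d` can be transformed, by a constant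
nonsingular matrix `M`, into a curve `t ↦ M γ(t)` of standard type. -/
theorem exists_matrix_standard_type
    (d : ℕ) (hd : 0 < d) (γ : ℝ → Fin d → ℝ) (hγ : IsWellCurved d γ) :
    ∃ M : Matrix (Fin d) (Fin d) ℝ, IsUnit M ∧
      IsStandardType d (fun t => M.mulVec (γ t)) := by
  classical
  obtain ⟨hsm, h0, hspan⟩ := hγ
  set v : ℕ → (Fin d → ℝ) := fun m => iteratedDeriv m γ 0 with hv
  have hv0 : v 0 = 0 := by simp [hv, iteratedDeriv_zero, h0]
  set S : ℕ → Submodule ℝ (Fin d → ℝ) := fun m => Submodule.span ℝ (v '' Set.Iic m) with hS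
  have hSmono : Monotone S := fun m n h =>
    Submodule.span_mono (Set.image_mono (Set.Iic_subset_Iic.mpr h))
  set r : ℕ → ℕ := fun m => Module.finrank ℝ (S m) with hr
  have hrmono : Monotone r := fun m n h => Submodule.finrank_mono (hSmono h)
  -- the start of the flag
  have hS0 : S 0 = ⊥ := by
    refine le_bot_iff.mp (Submodule.span_le.mpr ?_)
    rintro x ⟨m, hm, rfl⟩
    have hm0 : m = 0 := Nat.le_zero.mp hm
    simp [hm0, hv0]
  have hr0 : r 0 = 0 := by
    have h : r 0 = Module.finrank ℝ ↥(S 0) := rfl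
    rw [h, hS0, finrank_bot]
  -- one step of the flag
  have hSsucc : ∀ m, S (m + 1) = Submodule.span ℝ {v (m + 1)} ⊔ S m := by
    intro m
    have hins : Set.Iic (m + 1) = insert (m + 1) (Set.Iic m) := by
      ext x; simp only [Set.mem_Iic, Set.mem_insert_iff]; omega
    rw [hS]; simp only [hins, Set.image_insert_eq, Submodule.span_insert]
  have hrsucc : ∀ m, r (m + 1) ≤ r m + 1 := by
    intro m
    have h1 := Submodule.finrank_sup_add_finrank_inf_eq (Submodule.span ℝ {v (m + 1)}) (S m)
    have h2 : Module.finrank ℝ ↥(Submodule.span ℝ {v (m + 1)}) ≤ 1 := by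
      by_cases hz : v (m + 1) = 0
      · rw [hz, Submodule.span_zero_singleton]; simp
      · exact (finrank_span_singleton hz).le
    have h3 : Module.finrank ℝ ↥(S (m + 1)) = Module.finrank ℝ
        ↥(Submodule.span ℝ {v (m + 1)} ⊔ S m) := by rw [hSsucc m]
    have h4 : r m = Module.finrank ℝ ↥(S m) := rfl
    have h5 : r (m + 1) = Module.finrank ℝ ↥(S (m + 1)) := rfl
    omega
  -- the flag exhausts the space
  have hrv : Submodule.span ℝ (Set.range v) = ⊤ := by
    refine top_unique (hspan ▸ Submodule.span_mono ?_)
    rintro x ⟨k, rfl⟩; exact ⟨k + 1, rfl⟩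
  have hexN : ∃ N, S N = ⊤ := by
    have hc : IsCompactElement (⊤ : Submodule ℝ (Fin d → ℝ)) :=
      (Submodule.fg_iff_compact _).mp (Module.finite_def.mp inferInstance)
    obtain ⟨s, hs⟩ := CompleteLattice.IsCompactElement.exists_finset_of_le_iSup _ hc (fun i => Submodule.span ℝ {v i})
      (by rw [← Submodule.span_range_eq_iSup, hrv])
    refine ⟨s.sup id, top_unique (hs.trans ?_)⟩
    refine iSup₂_le fun i hi => Submodule.span_le.mpr ?_
    rintro x rfl
    exact Submodule.subset_span ⟨i, Finset.le_sup (f := id) hi, rfl⟩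
  obtain ⟨N, hN⟩ := hexN
  have hrN : r N = d := by
    have h : r N = Module.finrank ℝ ↥(S N) := rfl
    rw [h, hN, finrank_top]; exact Module.finrank_fin_fun ℝ
  have hex : ∀ k : ℕ, k < d → ∃ m, k < r m := fun k hk => ⟨N, by omega⟩
  -- the jump times
  set a : Fin d → ℕ := fun k => Nat.find (hex k k.2) with ha
  have haspec : ∀ k : Fin d, (k : ℕ) < r (a k) := fun k => Nat.find_spec (hex k k.2)
  have hapos : ∀ k, 1 ≤ a k := by
    intro k
    rcases Nat.eq_zero_or_pos (a k) with h | h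
    · exfalso; have := haspec k; rw [h, hr0] at this; omega
    · exact h
  have hamin : ∀ k : Fin d, r (a k - 1) ≤ (k : ℕ) := by
    intro k
    have := Nat.find_min (hex k k.2) (m := a k - 1) (Nat.sub_lt (hapos k) one_pos)
    omega
  have hasucc : ∀ k, a k - 1 + 1 = a k := fun k => Nat.succ_pred_eq_of_pos (hapos k)
  have hreq : ∀ k : Fin d, r (a k) = (k : ℕ) + 1 := by
    intro k
    have h1 := haspec k
    have h2 := hamin k
    have h3 := hrsucc (a k - 1)
    rw [hasucc k] at h3
    omega
  have hamono : StrictMono a := by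
    intro k k' hkk'
    have hkk : (k : ℕ) < (k' : ℕ) := hkk'
    simp only [ha]
    rw [Nat.lt_find_iff]
    intro m hm hcon
    have hle : r m ≤ (k : ℕ) + 1 := by
      have := hrmono (le_trans hm (le_of_eq rfl))
      calc r m ≤ r (Nat.find (hex k k.2)) := hrmono hm
        _ = (k : ℕ) + 1 := hreq k
    omega
  -- membership facts
  have hmemS : ∀ k : Fin d, ∀ m, m < a k → v m ∈ S (a k - 1) := by
    intro k m hm
    exact Submodule.subset_span ⟨m, Set.mem_Iic.mpr (by omega), rfl⟩
  have hnm : ∀ k : Fin d, v (a k) ∉ S (a k - 1) := by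
    intro k hmem
    have h := hSsucc (a k - 1)
    rw [hasucc k] at h
    have hle : S (a k) ≤ S (a k - 1) := by
      rw [h]
      exact sup_le ((Submodule.span_singleton_le_iff_mem _ _).mpr hmem) le_rfl
    have h4 := Submodule.finrank_mono hle
    have h5 : Module.finrank ℝ ↥(S (a k)) = (k : ℕ) + 1 := hreq k
    have h6 : Module.finrank ℝ ↥(S (a k - 1)) ≤ (k : ℕ) := hamin k
    omega
  -- the basis of jump derivatives
  set u : Fin d → (Fin d → ℝ) := fun j => v (a j) with hu
  have hli : LinearIndependent ℝ u := by
    refine linearIndependent_of_not_mem_span_earlier_aux u fun j hj => hnm j ?_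
    refine Submodule.span_le.mpr ?_ hj
    rintro x ⟨i, hi, rfl⟩
    exact hmemS j (a i) (hamono hi)
  haveI : Nonempty (Fin d) := ⟨⟨0, hd⟩⟩
  set B : Module.Basis (Fin d) ℝ (Fin d → ℝ) :=
    basisOfLinearIndependentOfCardEqFinrank hli
      (by rw [Fintype.card_fin, Module.finrank_fin_fun]) with hBdef
  have hB : ⇑B = u := coe_basisOfLinearIndependentOfCardEqFinrank hli _
  -- the flag is spanned by the first basis vectors
  have hSle : ∀ k : Fin d, S (a k - 1) ≤ Submodule.span ℝ (⇑B '' Set.Iio k) := by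
    intro k
    have hle : Submodule.span ℝ (⇑B '' Set.Iio k) ≤ S (a k - 1) := by
      refine Submodule.span_le.mpr ?_
      rintro x ⟨j, hj, rfl⟩
      rw [hB]
      have haj : a j < a k := hamono hj
      exact hmemS k (a j) (by omega)
    have hrank : Module.finrank ℝ ↥(S (a k - 1)) ≤
        Module.finrank ℝ ↥(Submodule.span ℝ (⇑B '' Set.Iio k)) := by
      have hcard : LinearIndependent ℝ (fun j : Set.Iio k => B j) :=
        B.linearIndependent.comp _ Subtype.val_injective
      have h1 := finrank_span_eq_card hcard
      rw [Set.image_eq_range, h1, ← Set.toFinset_card, Set.toFinset_Iio, Fin.card_Iio]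
      have h6 : Module.finrank ℝ ↥(S (a k - 1)) ≤ (k : ℕ) := hamin k
      omega
    exact (Submodule.eq_of_le_of_finrank_le hle hrank).symm.le
  -- the matrix
  set L : (Fin d → ℝ) →ₗ[ℝ] (Fin d → ℝ) := B.equivFun.toLinearMap with hL
  set M : Matrix (Fin d) (Fin d) ℝ := LinearMap.toMatrix' L with hM
  have hμ : ∀ x, M.mulVec x = B.equivFun x := fun x => by
    rw [hM, ← Matrix.toLin'_apply, Matrix.toLin'_toMatrix']; rfl
  have hMunit : IsUnit M := by
    have h1 : L ∘ₗ B.equivFun.symm.toLinearMap = LinearMap.id :=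
      LinearMap.ext fun x => B.equivFun.apply_symm_apply x
    have h2 : B.equivFun.symm.toLinearMap ∘ₗ L = LinearMap.id :=
      LinearMap.ext fun x => B.equivFun.symm_apply_apply x
    exact isUnit_iff_exists.mpr ⟨LinearMap.toMatrix' B.equivFun.symm.toLinearMap,
      by rw [hM, ← LinearMap.toMatrix'_comp, h1, LinearMap.toMatrix'_id],
      by rw [hM, ← LinearMap.toMatrix'_comp, h2, LinearMap.toMatrix'_id]⟩
  -- iterated derivatives of components of the transformed curve
  have hit : ∀ (k : Fin d) (m : ℕ),
      iteratedDeriv m (fun t => M.mulVec (γ t) k) 0 = B.repr (v m) k := by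
    intro k m
    set g : (Fin d → ℝ) →L[ℝ] ℝ :=
      (ContinuousLinearMap.proj k).comp (LinearMap.toContinuousLinearMap L) with hg
    have heq : (fun t => M.mulVec (γ t) k) = fun t => g (γ t) := by
      funext t; rw [hμ]
      simp [hg, hL, Module.Basis.equivFun_apply]
    rw [heq, iteratedDeriv_clm_comp_aux g hsm m 0]
    simp [hg, hv, hL, Module.Basis.equivFun_apply]
  refine ⟨M, hMunit, ?_, a, hamono, hapos, ?_⟩
  · have heq : (fun t => M.mulVec (γ t)) =
        fun t => (LinearMap.toContinuousLinearMap L) (γ t) := by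
      funext t; rw [hμ]; rfl
    rw [heq]
    exact (LinearMap.toContinuousLinearMap L).contDiff.comp hsm
  · intro k
    constructor
    · intro m hm
      rw [hit k m]
      have hmem : v m ∈ Submodule.span ℝ (⇑B '' Set.Iio k) := hSle k (hmemS k m hm)
      have hsupp := B.repr_support_subset_of_mem_span _ hmem
      refine Finsupp.notMem_support_iff.mp fun hcon => ?_
      exact absurd (hsupp hcon) (by simp)
    · rw [hit k (a k)]
      have : v (a k) = B k := by rw [hB]
      rw [this, B.repr_self]
      simp
end
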